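/- arXiv:1411.7645 — 2 statements merged into one kernel-verified Lean document; each statement's English description precedes it below -/
import Mathlib

section
/- The data of the canonical decomposition codes a definable subset of M₀: let M be a VO_n-structure, let E ⊆ M₀ be a basic-interval combination with canonical decomposition E = ⋃_{j∈B} I_j ∪ E₀, where I_j = ⋂_{i=1}^n fᵢ⁻¹((a^i_j, b^i_j)ᵢ) with a^i_j, b^i_j ∈ Mᵢ ∪ {−∞, +∞}, and let σ = (σ₀, …, σₙ) be an automorphism of M. Then σ₀(E) = E if and only if σ₀ fixes every element of E₀ and, for all i and j, σᵢ fixes every finite endpoint a^i_j and b^i_j. -/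
universe u

/-- A `VO n`-structure (for `n ≥ 1`): a sort `M0` with a distinguished element `0`, sorts
`M i` (`i ∈ {1,…,n}`, here indexed by `Fin n`) each carrying a dense linear order without
endpoints, and injective maps `f i : M0 → M i` whose images are dense and codense in `M i`,
such that any system of nonempty open intervals (one in each sort `M i`) can be
simultaneously hit by the image of a single point of `M0`. -/
structure VO (n : ℕ) (M0 : Type u) (M : Fin n → Type u) [∀ i, LinearOrder (M i)] where
  /-- the distinguished element `0` of the sort `M0` -/
  zero : M0
  /-- the maps `fᵢ : M₀ → Mᵢ` -/
  f : ∀ i, M0 → M i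
  f_inj : ∀ i, Function.Injective (f i)
  /-- each `<ᵢ` is a dense order -/
  lt_dense : ∀ (i) (a b : M i), a < b → ∃ c, a < c ∧ c < b
  /-- no greatest element -/
  no_top : ∀ (i) (a : M i), ∃ b, a < b
  /-- no least element -/
  no_bot : ∀ (i) (a : M i), ∃ b, b < a
  /-- `fᵢ(M₀)` is `<ᵢ`-dense in `Mᵢ` -/
  image_dense : ∀ (i) (a b : M i), a < b → ∃ x : M0, a < f i x ∧ f i x < b
  /-- `fᵢ(M₀)` is `<ᵢ`-codense in `Mᵢ` -/
  image_codense : ∀ (i) (a b : M i), a < b → ∃ y : M i, a < y ∧ y < b ∧ y ∉ Set.range (f i)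
  /-- simultaneous density: axiom 5 of `VO_n` -/
  sim_dense : ∀ a b : (∀ i, M i), (∀ i, a i < b i) →
    ∃ x : M0, ∀ i, a i < f i x ∧ f i x < b i

variable {n : ℕ} {M0 : Type u} {M : Fin n → Type u} [∀ i, LinearOrder (M i)]

open Classical in
/-- The map `gᵢ : Mᵢ → M₀`, the inverse of `fᵢ` on its image and `0` elsewhere. -/
noncomputable def VO.g (V : VO n M0 M) (i : Fin n) (y : M i) : M0 :=
  if h : ∃ x, V.f i x = y then h.choose else V.zero

/-- The substructure `⟨A⟩` generated by a subset `A` of the disjoint union of the sorts: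
the smallest subset containing `A ∪ {0}` and closed under all the maps `fᵢ` and `gᵢ`. -/
inductive VO.gen (V : VO n M0 M) (A : Set (M0 ⊕ Sigma M)) : (M0 ⊕ Sigma M) → Prop
  | mem (x : M0 ⊕ Sigma M) (hx : x ∈ A) : VO.gen V A x
  | zero : VO.gen V A (Sum.inl V.zero)
  | fcl (i : Fin n) (x : M0) (hx : VO.gen V A (Sum.inl x)) :
      VO.gen V A (Sum.inr ⟨i, V.f i x⟩)
  | gcl (i : Fin n) (y : M i) (hy : VO.gen V A (Sum.inr ⟨i, y⟩)) :
      VO.gen V A (Sum.inl (V.g i y))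

/-- `I` is an open interval of the linear order `α` (allowing `±∞` as endpoints). -/
def IsOpenInterval {α : Type*} [LinearOrder α] (I : Set α) : Prop :=
  (∃ a b : α, I = Set.Ioo a b) ∨ (∃ a : α, I = Set.Ioi a) ∨ (∃ b : α, I = Set.Iio b) ∨
    I = Set.univ

/-- `I` is an open interval of `α` all of whose finite endpoints lie in `S`. -/
def EndpointsIn {α : Type*} [LinearOrder α] (I : Set α) (S : Set α) : Prop :=
  (∃ a ∈ S, ∃ b ∈ S, I = Set.Ioo a b) ∨ (∃ a ∈ S, I = Set.Ioi a) ∨ (∃ b ∈ S, I = Set.Iio b) ∨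
    I = Set.univ

/-- A multi-interval: a subset of `M₀` of the form `⋂ i, fᵢ⁻¹(Iⁱ)` where each `Iⁱ` is a
nonempty open interval of `Mᵢ`. -/
def VO.IsMultiInterval (V : VO n M0 M) (S : Set M0) : Prop :=
  ∃ I : ∀ i, Set (M i), (∀ i, IsOpenInterval (I i) ∧ (I i).Nonempty) ∧
    S = ⋂ i, V.f i ⁻¹' I i

/-- `E ⊆ M₀` is multi-open: every point of `E` lies in a multi-interval contained in `E`. -/
def VO.MultiOpen (V : VO n M0 M) (E : Set M0) : Prop :=
  ∀ e ∈ E, ∃ S : Set M0, V.IsMultiInterval S ∧ e ∈ S ∧ S ⊆ E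

/-- `I` is the maximal multi-interval in `E` containing `e`, recorded componentwise:
`e ∈ ⋂ i, fᵢ⁻¹(I i) ⊆ E`, each `I i` is an open interval, and for each sort `m`, `I m` is the
largest open interval `X` with `fₘ(e) ∈ X` for which there exist open intervals `J j` (`j > m`)
containing `f j e` with `⋂_{l<m} fₗ⁻¹(I l) ∩ fₘ⁻¹(X) ∩ ⋂_{j>m} fⱼ⁻¹(J j) ⊆ E`. -/
def VO.IsMaxMultiInterval (V : VO n M0 M) (E : Set M0) (e : M0) (I : ∀ i, Set (M i)) : Prop :=
  (∀ i, IsOpenInterval (I i)) ∧ (∀ i, V.f i e ∈ I i) ∧ (⋂ i, V.f i ⁻¹' I i) ⊆ E ∧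
  ∀ (m : Fin n) (X : Set (M m)), IsOpenInterval X → V.f m e ∈ X →
    (∃ J : ∀ j, Set (M j),
      (∀ j, m < j → IsOpenInterval (J j) ∧ V.f j e ∈ J j) ∧
      ((⋂ l, ⋂ _ : l < m, V.f l ⁻¹' I l) ∩ V.f m ⁻¹' X ∩
        ⋂ j, ⋂ _ : m < j, V.f j ⁻¹' J j) ⊆ E) →
    X ⊆ I m


/-- `⋃_{I ∈ 𝓘} (⋂ i, fᵢ⁻¹(I i)) ∪ E₀` is a canonical decomposition of `E`:
`𝓘` is a finite set of (componentwise recorded) multi-intervals, `E₀ ⊆ E` is finite,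
no element of `E₀` lies in a multi-interval contained in `E`, every `e ∈ E ∖ E₀` has some
`I ∈ 𝓘` as the maximal multi-interval in `E` containing `e`, and every `I ∈ 𝓘` is the
maximal multi-interval in `E` containing some `e ∈ E ∖ E₀`. -/
def VO.IsCanonDecomp (V : VO n M0 M) (E : Set M0)
    (𝓘 : Set (∀ i, Set (M i))) (E0 : Set M0) : Prop :=
  𝓘.Finite ∧ E0.Finite ∧ E0 ⊆ E ∧
  (∀ I ∈ 𝓘, ∀ i, IsOpenInterval (I i) ∧ (I i).Nonempty) ∧
  E = (⋃ I ∈ 𝓘, ⋂ i, V.f i ⁻¹' I i) ∪ E0 ∧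
  (∀ x ∈ E0, ¬ ∃ S : Set M0, V.IsMultiInterval S ∧ x ∈ S ∧ S ⊆ E) ∧
  (∀ e ∈ E \ E0, ∃ I ∈ 𝓘, V.IsMaxMultiInterval E e I) ∧
  (∀ I ∈ 𝓘, ∃ e ∈ E \ E0, V.IsMaxMultiInterval E e I)

/-- The canonical embedding of `α` into `α ∪ {−∞, +∞}`. -/
def toExt {α : Type*} (x : α) : WithBot (WithTop α) := ((x : WithTop α) : WithBot (WithTop α))

/-- The open interval of `α` with endpoints `a, b ∈ α ∪ {−∞, +∞}`. -/
def extIoo {α : Type*} [LinearOrder α] (a b : WithBot (WithTop α)) : Set α :=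
  {x | a < toExt x ∧ toExt x < b}
/-! ### Auxiliary lemmas -/

lemma toExt_injective {α : Type*} : Function.Injective (toExt (α := α)) := by
  intro x y h
  simpa [toExt] using h

lemma toExt_lt_toExt {α : Type*} [LinearOrder α] {x y : α} :
    toExt x < toExt y ↔ x < y := by
  simp [toExt]

/-- An order automorphism preserving a finite set fixes it pointwise. -/
lemma orderIso_fixed_of_finite {α : Type*} [LinearOrder α] (φ : α ≃o α) {S : Set α}
    (hS : S.Finite) (hfix : φ '' S = S) : ∀ x ∈ S, φ x = x := by
  intro x hx
  have himg : ∀ y : α, φ '' (S ∩ Set.Iic y) = S ∩ Set.Iic (φ y) := by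
    intro y
    rw [Set.image_inter φ.injective, hfix, φ.image_Iic]
  have hcard : ∀ y : α, (S ∩ Set.Iic (φ y)).ncard = (S ∩ Set.Iic y).ncard := by
    intro y
    rw [← himg, Set.ncard_image_of_injective _ φ.injective]
  rcases le_total x (φ x) with h | h
  · have hsub : S ∩ Set.Iic x ⊆ S ∩ Set.Iic (φ x) :=
      Set.inter_subset_inter_right _ (Set.Iic_subset_Iic.2 h)
    have heq : S ∩ Set.Iic x = S ∩ Set.Iic (φ x) :=
      Set.eq_of_subset_of_ncard_le hsub (hcard x).le (hS.inter_of_left _)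
    have hmem : φ x ∈ S ∩ Set.Iic x := by
      rw [heq]
      exact ⟨hfix ▸ Set.mem_image_of_mem φ hx, le_refl _⟩
    exact le_antisymm hmem.2 h
  · have hsub : S ∩ Set.Iic (φ x) ⊆ S ∩ Set.Iic x :=
      Set.inter_subset_inter_right _ (Set.Iic_subset_Iic.2 h)
    have heq : S ∩ Set.Iic (φ x) = S ∩ Set.Iic x :=
      Set.eq_of_subset_of_ncard_le hsub (hcard x).ge (hS.inter_of_left _)
    have hmem : x ∈ S ∩ Set.Iic (φ x) := by
      rw [heq]; exact ⟨hx, le_refl _⟩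
    exact le_antisymm h hmem.2

/-- The extension of an order automorphism to `α ∪ {−∞, +∞}`. -/
def extMap {α : Type*} [LinearOrder α] (φ : α ≃o α) :
    WithBot (WithTop α) ≃o WithBot (WithTop α) :=
  φ.withTopCongr.withBotCongr

lemma extMap_toExt {α : Type*} [LinearOrder α] (φ : α ≃o α) (c : α) :
    extMap φ (toExt c) = toExt (φ c) := rfl

lemma image_extIoo {α : Type*} [LinearOrder α] (φ : α ≃o α) (p q : WithBot (WithTop α)) :
    φ '' extIoo p q = extIoo (extMap φ p) (extMap φ q) := by
  ext y
  constructor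
  · rintro ⟨z, ⟨hz1, hz2⟩, rfl⟩
    constructor
    · rw [← extMap_toExt]; exact (extMap φ).strictMono hz1
    · rw [← extMap_toExt]; exact (extMap φ).strictMono hz2
  · rintro ⟨h1, h2⟩
    have hy : toExt y = extMap φ (toExt (φ.symm y)) := by
      rw [extMap_toExt, φ.apply_symm_apply]
    rw [hy] at h1 h2
    exact ⟨φ.symm y, ⟨(extMap φ).lt_iff_lt.mp h1, (extMap φ).lt_iff_lt.mp h2⟩,
      φ.apply_symm_apply y⟩

lemma ext_eq_toExt_of_lt_toExt {α : Type*} [LinearOrder α] {q : WithBot (WithTop α)} {x : α}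
    (h : q < toExt x) (h' : q ≠ ⊥) : ∃ c : α, q = toExt c := by
  induction q using WithBot.recBotCoe with
  | bot => exact absurd rfl h'
  | coe t =>
    induction t using WithTop.recTopCoe with
    | top => exact absurd (WithBot.coe_lt_coe.mp h) not_top_lt
    | coe c => exact ⟨c, rfl⟩

lemma ext_eq_toExt_of_toExt_lt {α : Type*} [LinearOrder α] {q q' : WithBot (WithTop α)} {x : α}
    (h : toExt x < q) (h2 : q < q') : ∃ c : α, q = toExt c := by
  induction q using WithBot.recBotCoe with
  | bot => exact absurd h (by simp)
  | coe t =>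
    induction t using WithTop.recTopCoe with
    | top =>
      exfalso
      induction q' using WithBot.recBotCoe with
      | bot => exact absurd h2 (by simp)
      | coe t' => exact absurd (WithBot.coe_lt_coe.mp h2) not_top_lt
    | coe c => exact ⟨c, rfl⟩

lemma extIoo_lower_not_lt {α : Type*} [LinearOrder α] {p q p' q' : WithBot (WithTop α)}
    (h : extIoo p q = extIoo p' q') {x : α} (hx : x ∈ extIoo p q) : ¬ p < p' := by
  intro hlt
  have hx' : x ∈ extIoo p' q' := h ▸ hx
  obtain ⟨c, rfl⟩ := ext_eq_toExt_of_lt_toExt hx'.1 (ne_bot_of_gt hlt)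
  have hc : c ∈ extIoo p q := ⟨hlt, lt_trans hx'.1 hx.2⟩
  have hc' : c ∈ extIoo (toExt c) q' := h ▸ hc
  exact lt_irrefl _ hc'.1

lemma extIoo_upper_not_lt {α : Type*} [LinearOrder α] {p q p' q' : WithBot (WithTop α)}
    (h : extIoo p q = extIoo p' q') {x : α} (hx : x ∈ extIoo p q) : ¬ q < q' := by
  intro hlt
  have hx' : x ∈ extIoo p' q' := h ▸ hx
  obtain ⟨c, rfl⟩ := ext_eq_toExt_of_toExt_lt hx.2 hlt
  have hc : c ∈ extIoo p' q' := ⟨lt_trans hx'.1 hx.2, hlt⟩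
  have hc' : c ∈ extIoo p (toExt c) := h ▸ hc
  exact lt_irrefl _ hc'.2

/-- A nonempty extended open interval determines its endpoints. -/
lemma extIoo_endpoints_eq {α : Type*} [LinearOrder α] {p q p' q' : WithBot (WithTop α)}
    (h : extIoo p q = extIoo p' q') (hne : (extIoo p q).Nonempty) : p = p' ∧ q = q' := by
  obtain ⟨x, hx⟩ := hne
  have hx' : x ∈ extIoo p' q' := h ▸ hx
  constructor
  · exact le_antisymm (not_lt.mp (extIoo_lower_not_lt h.symm hx')) (not_lt.mp (extIoo_lower_not_lt h hx))
  · exact le_antisymm (not_lt.mp (extIoo_upper_not_lt h.symm hx')) (not_lt.mp (extIoo_upper_not_lt h hx))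

lemma IsOpenInterval.image {α : Type*} [LinearOrder α] {I : Set α} (h : IsOpenInterval I)
    (φ : α ≃o α) : IsOpenInterval (φ '' I) := by
  rcases h with ⟨p, q, rfl⟩ | ⟨p, rfl⟩ | ⟨q, rfl⟩ | rfl
  · exact Or.inl ⟨φ p, φ q, φ.image_Ioo p q⟩
  · exact Or.inr (Or.inl ⟨φ p, φ.image_Ioi p⟩)
  · exact Or.inr (Or.inr (Or.inl ⟨φ q, φ.image_Iio q⟩))
  · exact Or.inr (Or.inr (Or.inr (by rw [Set.image_univ, φ.surjective.range_eq])))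

lemma ext_lt_map {α : Type*} [LinearOrder α] (φ : α ≃o α) {q : WithBot (WithTop α)}
    (hq : ∀ c : α, q = toExt c → φ c = c) {z : α} (h : q < toExt z) :
    q < toExt (φ z) ∧ q < toExt (φ.symm z) := by
  induction q using WithBot.recBotCoe with
  | bot => exact ⟨WithBot.bot_lt_coe _, WithBot.bot_lt_coe _⟩
  | coe t =>
    induction t using WithTop.recTopCoe with
    | top => exact absurd (WithBot.coe_lt_coe.mp h) not_top_lt
    | coe c =>
      have hc : φ c = c := hq c rfl
      have hc' : φ.symm c = c := by
        conv_lhs => rw [← hc]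
        exact φ.symm_apply_apply c
      have h' : c < z := WithTop.coe_lt_coe.mp (WithBot.coe_lt_coe.mp h)
      constructor
      · exact WithBot.coe_lt_coe.mpr (WithTop.coe_lt_coe.mpr (hc ▸ φ.strictMono h'))
      · exact WithBot.coe_lt_coe.mpr (WithTop.coe_lt_coe.mpr (hc' ▸ φ.symm.strictMono h'))

lemma ext_map_lt {α : Type*} [LinearOrder α] (φ : α ≃o α) {q : WithBot (WithTop α)}
    (hq : ∀ c : α, q = toExt c → φ c = c) {z : α} (h : toExt z < q) :
    toExt (φ z) < q ∧ toExt (φ.symm z) < q := by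
  induction q using WithBot.recBotCoe with
  | bot => exact absurd h (by simp)
  | coe t =>
    induction t using WithTop.recTopCoe with
    | top =>
      exact ⟨WithBot.coe_lt_coe.mpr (WithTop.coe_lt_top _),
        WithBot.coe_lt_coe.mpr (WithTop.coe_lt_top _)⟩
    | coe c =>
      have hc : φ c = c := hq c rfl
      have hc' : φ.symm c = c := by
        conv_lhs => rw [← hc]
        exact φ.symm_apply_apply c
      have h' : z < c := WithTop.coe_lt_coe.mp (WithBot.coe_lt_coe.mp h)
      constructor
      · exact WithBot.coe_lt_coe.mpr (WithTop.coe_lt_coe.mpr (hc ▸ φ.strictMono h'))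
      · exact WithBot.coe_lt_coe.mpr (WithTop.coe_lt_coe.mpr (hc' ▸ φ.symm.strictMono h'))

/-- Transfer of "lies in a multi-interval inside `E`" along an automorphism. -/
lemma VO.exists_multiInterval_map (V : VO n M0 M) {E : Set M0}
    (σ0 : M0 ≃ M0) (σ : ∀ i, M i ≃o M i)
    (hf : ∀ (i : Fin n) (x : M0), σ i (V.f i x) = V.f i (σ0 x)) (hE : σ0 '' E = E) {x : M0}
    (hx : ∃ S, V.IsMultiInterval S ∧ x ∈ S ∧ S ⊆ E) :
    ∃ S, V.IsMultiInterval S ∧ σ0 x ∈ S ∧ S ⊆ E := by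
  obtain ⟨S, ⟨I, hI, rfl⟩, hxS, hSE⟩ := hx
  refine ⟨⋂ i, V.f i ⁻¹' (σ i '' I i),
    ⟨fun i => σ i '' I i, fun i => ⟨(hI i).1.image _, (hI i).2.image _⟩, rfl⟩, ?_, ?_⟩
  · simp only [Set.mem_iInter, Set.mem_preimage] at hxS ⊢
    intro i
    rw [← hf]
    exact Set.mem_image_of_mem _ (hxS i)
  · intro y hy
    simp only [Set.mem_iInter, Set.mem_preimage] at hy
    have hmem : σ0.symm y ∈ ⋂ i, V.f i ⁻¹' I i := by
      simp only [Set.mem_iInter, Set.mem_preimage]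
      intro i
      obtain ⟨z, hz, hz2⟩ := hy i
      have h2 : σ i (V.f i (σ0.symm y)) = V.f i y := by
        rw [hf, σ0.apply_symm_apply]
      have h3 : V.f i (σ0.symm y) = z := (σ i).injective (by rw [h2, hz2])
      rw [h3]; exact hz
    rw [← hE]
    exact ⟨σ0.symm y, hSE hmem, σ0.apply_symm_apply y⟩

/-- A maximal multi-interval is mapped by an automorphism to a maximal multi-interval. -/
lemma VO.IsMaxMultiInterval.map {V : VO n M0 M} {E : Set M0} {e : M0} {I : ∀ i, Set (M i)}
    (h : V.IsMaxMultiInterval E e I)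
    (σ0 : M0 ≃ M0) (σ : ∀ i, M i ≃o M i)
    (hf : ∀ (i : Fin n) (x : M0), σ i (V.f i x) = V.f i (σ0 x)) (hE : σ0 '' E = E) :
    V.IsMaxMultiInterval E (σ0 e) (fun i => σ i '' I i) := by
  obtain ⟨hop, hmem, hsub, hmax⟩ := h
  have hEmem : ∀ y : M0, σ0 y ∈ E ↔ y ∈ E := by
    intro y
    constructor
    · intro hy
      rw [← hE] at hy
      obtain ⟨z, hz, hz2⟩ := hy
      rwa [← σ0.injective hz2]
    · intro hy
      rw [← hE]
      exact ⟨y, hy, rfl⟩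
  refine ⟨fun i => (hop i).image _, fun i => ?_, ?_, ?_⟩
  · show V.f i (σ0 e) ∈ σ i '' I i
    rw [← hf]
    exact Set.mem_image_of_mem _ (hmem i)
  · intro y hy
    simp only [Set.mem_iInter, Set.mem_preimage] at hy
    have hmem2 : σ0.symm y ∈ ⋂ i, V.f i ⁻¹' I i := by
      simp only [Set.mem_iInter, Set.mem_preimage]
      intro i
      obtain ⟨z, hzI, hz⟩ := hy i
      have h2 : σ i (V.f i (σ0.symm y)) = V.f i y := by rw [hf, σ0.apply_symm_apply]
      have h3 : V.f i (σ0.symm y) = z := (σ i).injective (by rw [h2, hz])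
      rw [h3]; exact hzI
    have h3 := hsub hmem2
    have h4 := (hEmem (σ0.symm y)).mpr h3
    rwa [σ0.apply_symm_apply] at h4
  · rintro m X hX hXm ⟨J, hJ, hJsub⟩
    have key : (σ m).symm '' X ⊆ I m := by
      refine hmax m ((σ m).symm '' X) (hX.image _) ?_ ⟨fun j => (σ j).symm '' J j, ?_, ?_⟩
      · refine ⟨V.f m (σ0 e), hXm, ?_⟩
        rw [← hf]
        exact (σ m).symm_apply_apply _
      · intro j hj
        refine ⟨(hJ j hj).1.image _, ⟨V.f j (σ0 e), (hJ j hj).2, ?_⟩⟩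
        rw [← hf]
        exact (σ j).symm_apply_apply _
      · intro x hx
        rw [← hEmem x]
        apply hJsub
        obtain ⟨⟨hx1, hx2⟩, hx3⟩ := hx
        refine ⟨⟨?_, ?_⟩, ?_⟩
        · simp only [Set.mem_iInter, Set.mem_preimage] at hx1 ⊢
          intro l hl
          rw [← hf]
          exact Set.mem_image_of_mem _ (hx1 l hl)
        · simp only [Set.mem_preimage] at hx2 ⊢
          obtain ⟨z, hzX, hz⟩ := hx2
          rw [← hf, ← hz, (σ m).apply_symm_apply]
          exact hzX
        · simp only [Set.mem_iInter, Set.mem_preimage] at hx3 ⊢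
          intro j hj
          obtain ⟨z, hzJ, hz⟩ := hx3 j hj
          rw [← hf, ← hz, (σ j).apply_symm_apply]
          exact hzJ
    intro y hy
    exact ⟨(σ m).symm y, key ⟨y, hy, rfl⟩, (σ m).apply_symm_apply y⟩

lemma VO.IsMaxMultiInterval.subset_aux {V : VO n M0 M} {E : Set M0} {e : M0}
    {I I' : ∀ i, Set (M i)}
    (h : V.IsMaxMultiInterval E e I) (h' : V.IsMaxMultiInterval E e I') (m : Fin n)
    (hlt : ∀ l, l < m → I l = I' l) : I' m ⊆ I m := by
  refine h.2.2.2 m (I' m) (h'.1 m) (h'.2.1 m) ⟨fun j => I' j, fun j _ => ⟨h'.1 j, h'.2.1 j⟩, ?_⟩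
  intro x hx
  apply h'.2.2.1
  obtain ⟨⟨hx1, hx2⟩, hx3⟩ := hx
  simp only [Set.mem_iInter, Set.mem_preimage] at hx1 hx3 ⊢
  intro i
  rcases lt_trichotomy i m with hi | hi | hi
  · rw [← hlt i hi]; exact hx1 i hi
  · subst hi; exact hx2
  · exact hx3 i hi

/-- Uniqueness of the maximal multi-interval in `E` containing `e`. -/
lemma VO.IsMaxMultiInterval.unique {V : VO n M0 M} {E : Set M0} {e : M0}
    {I I' : ∀ i, Set (M i)}
    (h : V.IsMaxMultiInterval E e I) (h' : V.IsMaxMultiInterval E e I') : I = I' := by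
  have step : ∀ m : Fin n, (∀ l, l < m → I l = I' l) → I m = I' m := fun m hm =>
    Set.Subset.antisymm (h'.subset_aux h m fun l hl => (hm l hl).symm) (h.subset_aux h' m hm)
  have key : ∀ (k : ℕ) (m : Fin n), m.val ≤ k → I m = I' m := by
    intro k
    induction k with
    | zero =>
      intro m hm
      exact step m fun l hl => absurd (lt_of_lt_of_le (Fin.lt_def.mp hl) hm) (Nat.not_lt_zero _)
    | succ k ih =>
      intro m hm
      exact step m fun l hl => ih l (Nat.lt_succ_iff.mp (lt_of_lt_of_le (Fin.lt_def.mp hl) hm))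
  funext m
  exact key m.val m le_rfl

/-- The data of the canonical decomposition codes a definable subset of `M₀`:
if `E = ⋃_j (⋂ i, fᵢ⁻¹((aⱼⁱ, bⱼⁱ)ᵢ)) ∪ E₀` is a canonical decomposition of `E` and
`σ = (σ₀, …, σₙ)` is an automorphism of the `VO n`-structure, then `σ₀(E) = E` if and only if
`σ₀` fixes every element of `E₀` and each `σᵢ` fixes every finite endpoint `aⱼⁱ`, `bⱼⁱ`. -/
theorem VO.canonDecomp_codes {n : ℕ} (hn : 1 ≤ n)
    {M0 : Type u} {M : Fin n → Type u} [∀ i, LinearOrder (M i)]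
    (V : VO n M0 M) (E : Set M0) {ι : Type*} [Finite ι]
    (a b : ι → ∀ i, WithBot (WithTop (M i))) (E0 : Set M0)
    (hcd : V.IsCanonDecomp E (Set.range fun j => fun i => extIoo (a j i) (b j i)) E0)
    (σ0 : M0 ≃ M0) (σ : ∀ i, M i ≃o M i)
    (hz : σ0 V.zero = V.zero)
    (hf : ∀ (i : Fin n) (x : M0), σ i (V.f i x) = V.f i (σ0 x)) :
    σ0 '' E = E ↔
      ((∀ x ∈ E0, σ0 x = x) ∧
        ∀ (j : ι) (i : Fin n) (c : M i),
          (a j i = toExt c → σ i c = c) ∧ (b j i = toExt c → σ i c = c)) := by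
  obtain ⟨hIfin, hE0fin, hE0E, hIopen, hdecomp, hE0nomi, hmaxex, hmaxsur⟩ := hcd
  -- generic facts about inverse automorphisms
  have inv_hf : ∀ (τ0 : M0 ≃ M0) (τ : ∀ i, M i ≃o M i),
      (∀ (i : Fin n) (x : M0), τ i (V.f i x) = V.f i (τ0 x)) →
      ∀ (i : Fin n) (x : M0), (τ i).symm (V.f i x) = V.f i (τ0.symm x) := by
    intro τ0 τ hτ i x
    have h1 := hτ i (τ0.symm x)
    rw [τ0.apply_symm_apply] at h1
    rw [← h1, (τ i).symm_apply_apply]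
  have inv_hE : ∀ τ0 : M0 ≃ M0, τ0 '' E = E → τ0.symm '' E = E := by
    intro τ0 hτE
    calc τ0.symm '' E = τ0.symm '' (τ0 '' E) := by rw [hτE]
      _ = E := τ0.symm_image_image E
  constructor
  · -- forward direction
    intro hE
    -- E0 is carried into itself by any automorphism preserving E
    have hE0inv : ∀ (τ0 : M0 ≃ M0) (τ : ∀ i, M i ≃o M i),
        (∀ (i : Fin n) (x : M0), τ i (V.f i x) = V.f i (τ0 x)) → τ0 '' E = E →
        ∀ x ∈ E0, τ0 x ∈ E0 := by
      intro τ0 τ hτ hτE x hx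
      by_contra hnx
      have hxE : τ0 x ∈ E := by
        rw [← hτE]; exact ⟨x, hE0E hx, rfl⟩
      obtain ⟨I, _, hmax⟩ := hmaxex (τ0 x) ⟨hxE, hnx⟩
      have hmi : ∃ S, V.IsMultiInterval S ∧ τ0 x ∈ S ∧ S ⊆ E :=
        ⟨⋂ i, V.f i ⁻¹' I i,
          ⟨I, fun i => ⟨hmax.1 i, ⟨_, hmax.2.1 i⟩⟩, rfl⟩,
          by simp only [Set.mem_iInter, Set.mem_preimage]; exact hmax.2.1,
          hmax.2.2.1⟩
      have hmi' := V.exists_multiInterval_map τ0.symm (fun i => (τ i).symm)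
        (inv_hf τ0 τ hτ) (inv_hE τ0 hτE) hmi
      rw [τ0.symm_apply_apply] at hmi'
      exact hE0nomi x hx hmi'
    have hE0fix_set : σ0 '' E0 = E0 := by
      apply Set.Subset.antisymm
      · rintro _ ⟨x, hx, rfl⟩
        exact hE0inv σ0 σ hf hE x hx
      · intro x hx
        have h1 := hE0inv σ0.symm (fun i => (σ i).symm) (inv_hf σ0 σ hf) (inv_hE σ0 hE) x hx
        exact ⟨σ0.symm x, h1, σ0.apply_symm_apply x⟩
    -- σ0 fixes E0 pointwise
    have hE0fix : ∀ x ∈ E0, σ0 x = x := by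
      intro x hx
      have i0 : Fin n := ⟨0, hn⟩
      have him : σ i0 '' (V.f i0 '' E0) = V.f i0 '' E0 := by
        calc σ i0 '' (V.f i0 '' E0) = (fun y => σ i0 (V.f i0 y)) '' E0 := Set.image_image _ _ _
          _ = (fun y => V.f i0 (σ0 y)) '' E0 := by simp only [hf]
          _ = V.f i0 '' (σ0 '' E0) := (Set.image_image _ _ _).symm
          _ = V.f i0 '' E0 := by rw [hE0fix_set]
      have hfixed := orderIso_fixed_of_finite (σ i0) (hE0fin.image _) him
        (V.f i0 x) ⟨x, hx, rfl⟩
      rw [hf] at hfixed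
      exact V.f_inj i0 hfixed
    -- endpoint sets are finite
    have hSfin : ∀ i : Fin n,
        {c : M i | ∃ j, a j i = toExt c ∨ b j i = toExt c}.Finite := by
      intro i
      have hsub : {c : M i | ∃ j, a j i = toExt c ∨ b j i = toExt c} ⊆
          ⋃ j : ι, ({c | a j i = toExt c} ∪ {c | b j i = toExt c}) := by
        rintro c ⟨j, hj⟩
        exact Set.mem_iUnion.2 ⟨j, hj⟩
      refine Set.Finite.subset (Set.finite_iUnion fun j => Set.Finite.union ?_ ?_) hsub <;>
      · apply Set.Subsingleton.finite
        intro c hc d hd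
        exact toExt_injective (hc.symm.trans hd)
    -- endpoint stability under an automorphism preserving E
    have hSstab : ∀ (τ0 : M0 ≃ M0) (τ : ∀ i, M i ≃o M i),
        (∀ (i : Fin n) (x : M0), τ i (V.f i x) = V.f i (τ0 x)) → τ0 '' E = E →
        ∀ (i : Fin n) (c : M i), (∃ j, a j i = toExt c ∨ b j i = toExt c) →
        ∃ j', a j' i = toExt (τ i c) ∨ b j' i = toExt (τ i c) := by
      rintro τ0 τ hτ hτE i c ⟨j, hj⟩
      obtain ⟨e, ⟨heE, heE0⟩, hmaxe⟩ := hmaxsur _ ⟨j, rfl⟩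
      have hmax2 := hmaxe.map τ0 τ hτ hτE
      have hτe : τ0 e ∈ E \ E0 := by
        refine ⟨by rw [← hτE]; exact ⟨e, heE, rfl⟩, fun hc => heE0 ?_⟩
        have h1 := hE0inv τ0.symm (fun i => (τ i).symm) (inv_hf τ0 τ hτ) (inv_hE τ0 hτE)
          (τ0 e) hc
        rwa [τ0.symm_apply_apply] at h1
      obtain ⟨I', hI'mem, hmax'⟩ := hmaxex (τ0 e) hτe
      obtain ⟨j', hj'⟩ := hI'mem
      have heq := congrFun (hmax2.unique hmax') i
      rw [← hj'] at heq
      simp only at heq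
      rw [image_extIoo] at heq
      have hne : (extIoo (extMap (τ i) (a j i)) (extMap (τ i) (b j i))).Nonempty := by
        rw [← image_extIoo]
        exact ((hIopen _ ⟨j, rfl⟩ i).2).image _
      obtain ⟨ha', hb'⟩ := extIoo_endpoints_eq heq hne
      refine ⟨j', ?_⟩
      rcases hj with hj | hj
      · left; rw [← ha', hj, extMap_toExt]
      · right; rw [← hb', hj, extMap_toExt]
    have hSfix : ∀ (i : Fin n), ∀ c ∈ {c : M i | ∃ j, a j i = toExt c ∨ b j i = toExt c},
        σ i c = c := by
      intro i
      apply orderIso_fixed_of_finite (σ i) (hSfin i)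
      apply Set.Subset.antisymm
      · rintro _ ⟨c, hc, rfl⟩
        exact hSstab σ0 σ hf hE i c hc
      · intro c hc
        exact ⟨(σ i).symm c,
          hSstab σ0.symm (fun i => (σ i).symm) (inv_hf σ0 σ hf) (inv_hE σ0 hE) i c hc,
          (σ i).apply_symm_apply c⟩
    exact ⟨hE0fix, fun j i c =>
      ⟨fun h => hSfix i c ⟨j, Or.inl h⟩, fun h => hSfix i c ⟨j, Or.inr h⟩⟩⟩
  · -- reverse direction
    rintro ⟨h0, hep⟩
    have hfm : ∀ (j : ι) (i : Fin n) (y : M i), y ∈ extIoo (a j i) (b j i) →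
        σ i y ∈ extIoo (a j i) (b j i) ∧ (σ i).symm y ∈ extIoo (a j i) (b j i) := by
      rintro j i y ⟨h1, h2⟩
      obtain ⟨l1, l2⟩ := ext_lt_map (σ i) (fun c hc => (hep j i c).1 hc) h1
      obtain ⟨u1, u2⟩ := ext_map_lt (σ i) (fun c hc => (hep j i c).2 hc) h2
      exact ⟨⟨l1, u1⟩, ⟨l2, u2⟩⟩
    have hstep : ∀ x ∈ E, σ0 x ∈ E ∧ σ0.symm x ∈ E := by
      intro x hx
      rw [hdecomp] at hx
      rcases hx with hx | hx
      · simp only [Set.mem_iUnion] at hx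
        obtain ⟨I, ⟨j, hjI⟩, hxI⟩ := hx
        subst hjI
        simp only [Set.mem_iInter, Set.mem_preimage] at hxI
        have hin : ∀ y : M0, (∀ i, V.f i y ∈ extIoo (a j i) (b j i)) → y ∈ E := by
          intro y hy
          rw [hdecomp]
          left
          refine Set.mem_iUnion.2 ⟨_, Set.mem_iUnion.2 ⟨⟨j, rfl⟩, ?_⟩⟩
          simp only [Set.mem_iInter, Set.mem_preimage]
          exact hy
        constructor
        · apply hin
          intro i
          rw [← hf]
          exact (hfm j i _ (hxI i)).1
        · apply hin
          intro i
          rw [← inv_hf σ0 σ hf]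
          exact (hfm j i _ (hxI i)).2
      · have hx' := h0 x hx
        have hx'' : σ0.symm x = x := by
          conv_lhs => rw [← hx']
          exact σ0.symm_apply_apply x
        constructor
        · rw [hx']; exact hE0E hx
        · rw [hx'']; exact hE0E hx
    apply Set.Subset.antisymm
    · rintro _ ⟨x, hx, rfl⟩
      exact (hstep x hx).1
    · intro x hx
      exact ⟨σ0.symm x, (hstep x hx).2, σ0.apply_symm_apply x⟩
end

section
/- In a VO_n-structure, the substructure generated by a nonempty set is the union of the singly generated substructures: for every nonempty subset A of the disjoint union of the sorts, ⟨A⟩ = ⋃_{a∈A} ⟨{a}⟩. In particular, if A is finite then ⟨A⟩ is finite. -/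
universe u

variable {n : ℕ} {M0 : Type u} {M : Fin n → Type u} [∀ i, LinearOrder (M i)]

lemma VO.g_f (V : VO n M0 M) (i : Fin n) (x : M0) : V.g i (V.f i x) = x := by
  unfold VO.g
  rw [dif_pos ⟨x, rfl⟩]
  exact V.f_inj i (Exists.choose_spec (⟨x, rfl⟩ : ∃ c, V.f i c = V.f i x))

lemma VO.gen_mono (V : VO n M0 M) {A B : Set (M0 ⊕ Sigma M)} (h : A ⊆ B) {x}
    (hx : V.gen A x) : V.gen B x := by
  induction hx with
  | mem x hx => exact .mem x (h hx)
  | zero => exact .zero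
  | fcl i x _ ih => exact .fcl i x ih
  | gcl i y _ ih => exact .gcl i y ih

lemma VO.gen_split (V : VO n M0 M) {A : Set (M0 ⊕ Sigma M)} (hne : A.Nonempty) {x}
    (hx : V.gen A x) : ∃ a ∈ A, V.gen {a} x := by
  induction hx with
  | mem x hx => exact ⟨x, hx, .mem x rfl⟩
  | zero => obtain ⟨a, ha⟩ := hne; exact ⟨a, ha, .zero⟩
  | fcl i x _ ih => obtain ⟨a, ha, h⟩ := ih; exact ⟨a, ha, .fcl i x h⟩
  | gcl i y _ ih => obtain ⟨a, ha, h⟩ := ih; exact ⟨a, ha, .gcl i y h⟩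

lemma VO.gen_singleton_finite (V : VO n M0 M) (a : M0 ⊕ Sigma M) :
    {x | V.gen {a} x}.Finite := by
  classical
  set base : M0 := Sum.elim id (fun p => V.g p.1 p.2) a with hbase
  set S0 : Set M0 := {base, V.zero} with hS0
  set F : Set (M0 ⊕ Sigma M) :=
    (Sum.inl '' S0) ∪ (⋃ x ∈ S0, ⋃ j : Fin n, {Sum.inr ⟨j, V.f j x⟩}) ∪ {a} with hFdef
  have hF : {x | V.gen {a} x} ⊆ F := by
    intro x hx
    induction hx with
    | mem x hx => exact Or.inr hx
    | zero => exact Or.inl (Or.inl ⟨V.zero, Or.inr rfl, rfl⟩)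
    | fcl i x hx ih =>
        have hx0 : x ∈ S0 := by
          rcases ih with ((⟨s, hs, he⟩ | hmid) | ha)
          · cases he; exact hs
          · simp only [Set.mem_iUnion, Set.mem_singleton_iff] at hmid
            obtain ⟨s, hs, j, he⟩ := hmid
            exact absurd he (by simp)
          · rw [Set.mem_singleton_iff] at ha
            subst ha
            exact Or.inl rfl
        refine Or.inl (Or.inr ?_)
        simp only [Set.mem_iUnion, Set.mem_singleton_iff]
        exact ⟨x, hx0, i, rfl⟩
    | gcl i y hy ih =>
        have : V.g i y ∈ S0 := by
          rcases ih with ((⟨s, hs, he⟩ | hmid) | ha)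
          · exact absurd he (by simp)
          · simp only [Set.mem_iUnion, Set.mem_singleton_iff] at hmid
            obtain ⟨s, hs, j, he⟩ := hmid
            obtain ⟨rfl, he2⟩ := Sigma.mk.inj_iff.mp (Sum.inr.inj he)
            rw [eq_of_heq he2, V.g_f]
            exact hs
          · rw [Set.mem_singleton_iff] at ha
            subst ha
            exact Or.inl rfl
        exact Or.inl (Or.inl ⟨V.g i y, this, rfl⟩)
  refine Set.Finite.subset ?_ hF
  have hS0fin : S0.Finite := (Set.finite_singleton _).insert _
  refine ((hS0fin.image _).union ?_).union (Set.finite_singleton _)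
  exact hS0fin.biUnion fun x _ => Set.finite_iUnion fun j => Set.finite_singleton _

/-- In a `VO n`-structure (`n ≥ 1`), the substructure generated by a nonempty
set `A` is the union of the singly generated substructures: `⟨A⟩ = ⋃_{a ∈ A} ⟨{a}⟩`.
In particular, if `A` is finite then `⟨A⟩` is finite. -/
theorem VO.gen_eq_iUnion_gen_singleton {n : ℕ} (hn : 1 ≤ n)
    {M0 : Type u} {M : Fin n → Type u} [∀ i, LinearOrder (M i)]
    (V : VO n M0 M) (A : Set (M0 ⊕ Sigma M)) (hne : A.Nonempty) :
    {x | V.gen A x} = (⋃ a ∈ A, {x | V.gen {a} x}) ∧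
      (A.Finite → {x | V.gen A x}.Finite) := by
  have heq : {x | V.gen A x} = (⋃ a ∈ A, {x | V.gen {a} x}) := by
    ext x
    simp only [Set.mem_setOf_eq, Set.mem_iUnion]
    constructor
    · intro hx
      obtain ⟨a, ha, h⟩ := V.gen_split hne hx
      exact ⟨a, ha, h⟩
    · rintro ⟨a, ha, h⟩
      exact V.gen_mono (by simpa using ha) h
  refine ⟨heq, fun hA => ?_⟩
  rw [heq]
  exact hA.biUnion fun a _ => V.gen_singleton_finite a
end
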